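/- Let H be a d-uniform properly-connected hypergraph, E an edge with N(E) = {z_1,...,z_t}, and H' = {K edge of H : dist_H(E, K) ≥ d+1}. Then (x^E) ∩ I(H\E) = x^E · ((z_1,...,z_t) + I(H')), where I denotes the edge ideal. -/

import Mathlib

open Finset
open scoped Classical

noncomputable section

/-- A simple hypergraph: all edges have at least two vertices and no edge contains another. -/
structure SimpleHypergraph (V : Type*) where
  edges : Finset (Finset V)
  card_ge : ∀ e ∈ edges, 2 ≤ e.card
  antichain : ∀ e ∈ edges, ∀ f ∈ edges, e ⊆ f → e = f

variable {V : Type*} [DecidableEq V]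

/-- A chain `(E₀, x₁, E₁, …, xₙ, Eₙ)` in a hypergraph, recorded as the list of its edges;
the vertex conditions amount to `xₖ ∈ Eₖ₋₁ ∩ Eₖ`. -/
def IsHChain (H : SimpleHypergraph V) (l : List (Finset V)) : Prop :=
  l ≠ [] ∧ l.Nodup ∧ (∀ e ∈ l, e ∈ H.edges) ∧
  ∃ xs : List V, xs.Nodup ∧ xs.length + 1 = l.length ∧
    ∀ i, (h : i < xs.length) → xs.get ⟨i, h⟩ ∈ l.getD i ∅ ∩ l.getD (i+1) ∅

/-- A proper chain: `|Eᵢ ∩ Eᵢ₊₁| = |Eᵢ₊₁| - 1` for all `i`. -/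
def IsProperChain (H : SimpleHypergraph V) (l : List (Finset V)) : Prop :=
  IsHChain H l ∧ ∀ i, i + 1 < l.length →
    (l.getD i ∅ ∩ l.getD (i+1) ∅).card + 1 = (l.getD (i+1) ∅).card

/-- A proper irredundant chain: no proper subsequence with the same endpoints is a proper
chain. -/
def IsPIChain (H : SimpleHypergraph V) (l : List (Finset V)) : Prop :=
  IsProperChain H l ∧ ∀ l' : List (Finset V), l'.Sublist l → l' ≠ l →
    l'.head? = l.head? → l'.getLast? = l.getLast? → ¬ IsProperChain H l'

/-- The distance between two edges: minimal length of a proper irredundant chain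
from `E` to `F` (`∞` if there is none). -/
def edgeDist (H : SimpleHypergraph V) (E F : Finset V) : ℕ∞ :=
  sInf ((fun l : List (Finset V) => ((l.length - 1 : ℕ) : ℕ∞)) ''
    {l | IsPIChain H l ∧ l.head? = some E ∧ l.getLast? = some F})

/-- A `d`-uniform properly-connected hypergraph. -/
def UniformPC (H : SimpleHypergraph V) (d : ℕ) : Prop :=
  (∀ e ∈ H.edges, e.card = d) ∧
  ∀ E ∈ H.edges, ∀ F ∈ H.edges, (E ∩ F).Nonempty →
    edgeDist H E F = ((d - (E ∩ F).card : ℕ) : ℕ∞)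

/-- The sub-hypergraph consisting of the edges satisfying `P`. -/
def SimpleHypergraph.restrict (H : SimpleHypergraph V) (P : Finset V → Prop) :
    SimpleHypergraph V where
  edges := H.edges.filter P
  card_ge := fun e he => H.card_ge e (Finset.mem_filter.mp he).1
  antichain := fun e he f hf hef =>
    H.antichain e (Finset.mem_filter.mp he).1 f (Finset.mem_filter.mp hf).1 hef

/-- The vertex neighbor set `N(E)` of an edge: union of `F \ E` over edges at distance 1. -/
def nbrSet (H : SimpleHypergraph V) (E : Finset V) : Finset V :=
  (H.edges.filter fun F => edgeDist H E F = 1).sup fun F => F \ E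

variable (k : Type*) [Field k]

/-- The squarefree monomial attached to an edge. -/
def edgeMonomial (E : Finset V) : MvPolynomial V k := ∏ x ∈ E, MvPolynomial.X x

/-- The edge ideal of a hypergraph. -/
def edgeIdeal (H : SimpleHypergraph V) : Ideal (MvPolynomial V k) :=
  Ideal.span ((fun E => edgeMonomial k E) '' ↑H.edges)

/-- The exponent vector of the squarefree monomial attached to an edge. -/
def mexp (E : Finset V) : V →₀ ℕ := ∑ x ∈ E, Finsupp.single x 1

/-- The minimal monomials (w.r.t. divisibility) among a finite set of monomials;
these are the minimal generators of the monomial ideal they generate. -/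
def minMon (A : Finset (V →₀ ℕ)) : Finset (V →₀ ℕ) :=
  A.filter fun m => ∀ m' ∈ A, m' ≤ m → m' = m

/-- Minimal generators of `J ∩ K`, where `J`, `K` are the monomial ideals with
(minimal) monomial generators `A`, `B`: minimal elements among the pairwise lcm's. -/
def interMin (A B : Finset (V →₀ ℕ)) : Finset (V →₀ ℕ) :=
  minMon ((A ×ˢ B).image fun p => p.1 ⊔ p.2)

/-- Eliahou–Kervaire splitting: the monomial ideal generated by `A ∪ B` is split as
the sum of the ideals generated by `A` and by `B`. -/
def IsSplitting (A B : Finset (V →₀ ℕ)) : Prop :=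
  A.Nonempty ∧ B.Nonempty ∧ Disjoint A B ∧
  (∀ m ∈ A ∪ B, ∀ m' ∈ A ∪ B, m' ≤ m → m' = m) ∧
  ∃ φ ψ : (V →₀ ℕ) → (V →₀ ℕ),
    (∀ w ∈ interMin A B, φ w ∈ A ∧ ψ w ∈ B ∧ w = φ w ⊔ ψ w) ∧
    ∀ S ⊆ interMin A B, S.Nonempty → S.sup φ < S.sup id ∧ S.sup ψ < S.sup id

/-- A splitting edge of a hypergraph: `I(H) = (x^E) + I(H \ E)` is a splitting. -/
def IsSplittingEdge (H : SimpleHypergraph V) (E : Finset V) : Prop :=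
  E ∈ H.edges ∧ IsSplitting {mexp E} ((H.edges.erase E).image mexp)

variable [LinearOrder V]

/-- Total degree of a monomial. -/
def mdeg (m : V →₀ ℕ) : ℕ := m.sum fun _ e => e

/-- Basis of the degree-`j` part of the `i`-th term of the Taylor complex of the monomial
ideal generated by `G`: `i`-element subsets of `G` whose lcm has degree `j`. -/
def TaylorIndex (G : Finset (V →₀ ℕ)) (i j : ℕ) : Finset (Finset (V →₀ ℕ)) :=
  G.powerset.filter fun S => S.card = i ∧ mdeg (S.sup id) = j

/-- Matrix of the Taylor-complex differential `T_{i+1} → T_i` reduced mod the maximal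
ideal, in homological degree-`j` graded part. -/
def taylorMatrix (G : Finset (V →₀ ℕ)) (i j : ℕ) :
    Matrix (TaylorIndex G i j) (TaylorIndex G (i+1) j) k :=
  fun S' S =>
    if (S' : Finset (V →₀ ℕ)) ⊆ (S : Finset (V →₀ ℕ)) ∧
        (S' : Finset (V →₀ ℕ)).sup id = (S : Finset (V →₀ ℕ)).sup id then
      ∑ m ∈ (S : Finset (V →₀ ℕ)) \ (S' : Finset (V →₀ ℕ)),
        (-1 : k) ^ ((S' : Finset (V →₀ ℕ)).filter fun a => toLex a < toLex m).card
    else 0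

/-- The Taylor-complex differential reduced mod the maximal ideal. -/
def taylorBoundary (G : Finset (V →₀ ℕ)) (i j : ℕ) :
    ((TaylorIndex G (i+1) j) → k) →ₗ[k] ((TaylorIndex G i j) → k) :=
  Matrix.mulVecLin (taylorMatrix k G i j)

/-- The graded Betti number `β_{i,j}` of the monomial ideal generated by `G`, computed as
the dimension of the degree-`j` part of the `i`-th homology of the Taylor complex tensored
with the residue field. -/
def monomialBetti (G : Finset (V →₀ ℕ)) (i j : ℕ) : ℕ :=
  Module.finrank k (LinearMap.ker (taylorBoundary k G i j)) -
  Module.finrank k (LinearMap.range (taylorBoundary k G (i+1) j))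

/-- Castelnuovo–Mumford regularity of the monomial ideal generated by `G`. -/
def monReg (G : Finset (V →₀ ℕ)) : ℕ :=
  sSup {r | ∃ i j, monomialBetti k G i j ≠ 0 ∧ r + i = j}

/-- Projective dimension of the monomial ideal generated by `G`. -/
def monPdim (G : Finset (V →₀ ℕ)) : ℕ :=
  sSup {i | ∃ j, monomialBetti k G i j ≠ 0}

/-- Graded Betti numbers of the edge ideal of a hypergraph. -/
def edgeBetti (H : SimpleHypergraph V) (i j : ℕ) : ℕ :=
  monomialBetti k (H.edges.image mexp) i j

/-- Regularity of the edge ideal of a hypergraph. -/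
def edgeReg (H : SimpleHypergraph V) : ℕ :=
  monReg k (H.edges.image mexp)

/-!
Since `x^E` is squarefree, `(x^E) ∩ I(H \ E) = x^E · J` with `J` generated by the monomials
`x^(F \ E)`, `F ≠ E`, so it suffices to compare generators. An edge `F` at distance `> d` from `E`
is disjoint from it, so `x^(F \ E) = x^F`. If instead `F ≠ E` is at distance `t ≤ d`, take a
proper chain `E, E₁, …, F` of length `t`: the vertex `z` with `E₁ \ E = {z}` lies in `N(E)`, and
it lies in `F`, for otherwise `E ∩ F ⊇ E₁ ∩ F`, which has at least `d - t + 1` elements, would put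
`F` at distance `< t` from `E`. Conversely `{z} = F \ E` for every `z ∈ N(E)` and some edge `F`
at distance one.
-/

section EdgeMonomial

variable {α : Type*} (K : Type*) [Field K]

theorem edgeMonomial_eq_monomial (s : Finset α) :
    edgeMonomial K s = MvPolynomial.monomial (mexp s) 1 := by
  rw [edgeMonomial, mexp, MvPolynomial.monomial_sum_one]
  rfl

theorem edgeMonomial_singleton (z : α) : edgeMonomial K {z} = MvPolynomial.X z :=
  prod_singleton _ _

theorem edgeMonomial_dvd {s t : Finset α} (h : s ⊆ t) : edgeMonomial K s ∣ edgeMonomial K t :=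
  prod_dvd_prod_of_subset s t _ h

theorem edgeMonomial_mul_sdiff [DecidableEq α] (E s : Finset α) :
    edgeMonomial K E * edgeMonomial K (s \ E) = edgeMonomial K (E ∪ s) := by
  rw [edgeMonomial, edgeMonomial, ← prod_union disjoint_sdiff, union_sdiff_self_eq_union]
  rfl

theorem mexp_apply [DecidableEq α] (s : Finset α) (x : α) :
    mexp s x = if x ∈ s then 1 else 0 := by
  simp [mexp, Finsupp.finsetSum_apply, Finsupp.single_apply]

theorem mexp_sdiff_le_of_le_add [DecidableEq α] {s E : Finset α} {a : α →₀ ℕ}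
    (h : mexp s ≤ a + mexp E) : mexp (s \ E) ≤ a := fun x => by
  have hx := h x
  simp only [Finsupp.add_apply, mexp_apply, mem_sdiff] at hx ⊢
  split_ifs at hx ⊢ <;> grind

theorem span_edgeMonomial_le_span {S T : Set (Finset α)} (h : ∀ s ∈ S, ∃ t ∈ T, t ⊆ s) :
    Ideal.span (edgeMonomial K '' S) ≤ Ideal.span (edgeMonomial K '' T) := by
  rw [Ideal.span_le]
  rintro _ ⟨s, hs, rfl⟩
  obtain ⟨t, ht, hts⟩ := h s hs
  exact Ideal.mem_of_dvd _ (edgeMonomial_dvd K hts) (Ideal.subset_span ⟨t, ht, rfl⟩)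

theorem span_edgeMonomial_eq_span_monomial (S : Set (Finset α)) :
    Ideal.span (edgeMonomial K '' S) =
      Ideal.span ((fun m => MvPolynomial.monomial m (1 : K)) '' (mexp '' S)) := by
  rw [Set.image_image]
  simp only [edgeMonomial_eq_monomial]

theorem mem_span_edgeMonomial_sdiff_of_mul_mem [DecidableEq α] {E : Finset α}
    {S : Set (Finset α)} {q : MvPolynomial α K}
    (h : q * edgeMonomial K E ∈ Ideal.span (edgeMonomial K '' S)) :
    q ∈ Ideal.span (edgeMonomial K '' ((· \ E) '' S)) := by
  rw [span_edgeMonomial_eq_span_monomial, MvPolynomial.mem_ideal_span_monomial_image] at h ⊢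
  rw [edgeMonomial_eq_monomial] at h
  intro a ha
  have haE : a + mexp E ∈ (q * MvPolynomial.monomial (mexp E) 1).support := by
    rwa [MvPolynomial.mem_support_iff, MvPolynomial.coeff_mul_monomial, mul_one,
      ← MvPolynomial.mem_support_iff]
  obtain ⟨_, ⟨s, hs, rfl⟩, hle⟩ := h _ haE
  exact ⟨_, ⟨s \ E, ⟨s, hs, rfl⟩, rfl⟩, mexp_sdiff_le_of_le_add hle⟩

theorem span_singleton_edgeMonomial_inf_span [DecidableEq α] (E : Finset α)
    (S : Set (Finset α)) :
    Ideal.span {edgeMonomial K E} ⊓ Ideal.span (edgeMonomial K '' S) =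
      Ideal.span {edgeMonomial K E} * Ideal.span (edgeMonomial K '' ((· \ E) '' S)) := by
  refine le_antisymm ?_ (le_inf Ideal.mul_le_left ?_)
  · rintro _ ⟨hpE, hpS⟩
    obtain ⟨q, rfl⟩ := Ideal.mem_span_singleton'.1 hpE
    rw [mul_comm q]
    exact Ideal.mul_mem_mul (Ideal.mem_span_singleton_self _)
      (mem_span_edgeMonomial_sdiff_of_mul_mem K hpS)
  · rw [Ideal.span_mul_span', Ideal.span_le]
    rintro _ ⟨_, rfl, _, ⟨_, ⟨s, hs, rfl⟩, rfl⟩, rfl⟩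
    beta_reduce
    rw [SetLike.mem_coe, edgeMonomial_mul_sdiff]
    exact Ideal.mem_of_dvd _ (edgeMonomial_dvd K subset_union_right)
      (Ideal.subset_span ⟨s, hs, rfl⟩)

end EdgeMonomial

theorem SimpleHypergraph.mem_restrict_edges {α : Type*} {H : SimpleHypergraph α}
    {P : Finset α → Prop} {F : Finset α} : F ∈ (H.restrict P).edges ↔ F ∈ H.edges ∧ P F :=
  mem_filter

section Chains

variable {α : Type*} [DecidableEq α] {H : SimpleHypergraph α}

theorem IsHChain.inter_nonempty {A B : Finset α} {l : List (Finset α)}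
    (h : IsHChain H (A :: B :: l)) : (A ∩ B).Nonempty := by
  obtain ⟨-, -, -, xs, -, hlen, hxs⟩ := h
  have h0 : 0 < xs.length := by simp only [List.length_cons] at hlen; omega
  exact ⟨_, by simpa using hxs 0 h0⟩

theorem IsProperChain.card_inter_add_one {A B : Finset α} {l : List (Finset α)}
    (h : IsProperChain H (A :: B :: l)) : (A ∩ B).card + 1 = B.card := by
  simpa using h.2 0 (by simp)

theorem IsProperChain.card_sdiff_eq_one {A B : Finset α} {l : List (Finset α)}
    (h : IsProperChain H (A :: B :: l)) : (B \ A).card = 1 := by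
  have := card_sdiff_add_card_inter B A
  rw [inter_comm] at this
  have := h.card_inter_add_one
  omega

theorem IsProperChain.tail {A : Finset α} {l : List (Finset α)}
    (h : IsProperChain H (A :: l)) (hl : l ≠ []) : IsProperChain H l := by
  obtain ⟨⟨-, hnd, hedges, xs, hxsnd, hxslen, hxs⟩, hprop⟩ := h
  simp only [List.length_cons] at hxslen
  have := List.length_pos_iff.mpr hl
  refine ⟨⟨hl, (List.nodup_cons.mp hnd).2, fun e he => hedges e (List.mem_cons_of_mem _ he),
    xs.tail, hxsnd.tail, by rw [List.length_tail]; omega, fun i hi => ?_⟩, fun i hi => ?_⟩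
  · rw [List.length_tail] at hi
    simpa [List.getElem_tail] using hxs (i + 1) (by omega)
  · simpa using hprop (i + 1) (by simp only [List.length_cons]; omega)

theorem IsProperChain.card_sdiff_le {A B : Finset α} {l : List (Finset α)}
    (h : IsProperChain H (A :: l)) (hB : (A :: l).getLast? = some B) :
    (B \ A).card ≤ l.length := by
  induction l generalizing A with
  | nil =>
    obtain rfl : A = B := by simpa using hB
    simp
  | cons C l ih =>
    rw [List.getLast?_cons_cons] at hB
    have hC := h.card_sdiff_eq_one
    have hBC := ih (h.tail (List.cons_ne_nil _ _)) hB
    have hsub : B \ A ⊆ (B \ C) ∪ (C \ A) := by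
      intro x hx
      simp only [mem_sdiff, mem_union] at hx ⊢
      tauto
    have := (card_le_card hsub).trans (card_union_le _ _)
    simp only [List.length_cons]
    omega

theorem exists_isProperChain_of_edgeDist_ne_top {E F : Finset α} (h : edgeDist H E F ≠ ⊤) :
    ∃ l, IsProperChain H (E :: l) ∧ (E :: l).getLast? = some F ∧
      (l.length : ℕ∞) = edgeDist H E F := by
  have hne : ((fun l : List (Finset α) => ((l.length - 1 : ℕ) : ℕ∞)) ''
      {l | IsPIChain H l ∧ l.head? = some E ∧ l.getLast? = some F}).Nonempty := by
    by_contra hc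
    exact h (by rw [edgeDist, Set.not_nonempty_iff_eq_empty.mp hc, sInf_empty])
  obtain ⟨l, ⟨hl, hhead, hlast⟩, hval⟩ := csInf_mem hne
  obtain ⟨A, l, rfl⟩ := List.exists_cons_of_ne_nil hl.1.1.1
  obtain rfl : A = E := by simpa using hhead
  exact ⟨l, hl.1, hlast, by rw [edgeDist]; simpa using hval⟩

theorem card_sdiff_eq_one_of_edgeDist_eq_one {E F : Finset α} (h : edgeDist H E F = 1) :
    (F \ E).card = 1 := by
  obtain ⟨l, hl, hlast, hlen⟩ := exists_isProperChain_of_edgeDist_ne_top (h ▸ ENat.one_ne_top)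
  rw [h] at hlen
  obtain ⟨B, rfl⟩ := List.length_eq_one_iff.mp (by exact_mod_cast hlen)
  obtain rfl : B = F := by simpa using hlast
  exact hl.card_sdiff_eq_one

theorem mem_nbrSet_iff {E : Finset α} {z : α} :
    z ∈ nbrSet H E ↔ ∃ F ∈ H.edges, edgeDist H E F = 1 ∧ F \ E = {z} := by
  simp only [nbrSet, mem_sup, mem_filter, and_assoc]
  refine exists_congr fun F => and_congr_right fun _ => and_congr_right fun hF => ?_
  obtain ⟨w, hw⟩ := card_eq_one.1 (card_sdiff_eq_one_of_edgeDist_eq_one hF)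
  simp [hw, eq_comm]

end Chains

namespace UniformPC

variable {α : Type*} [DecidableEq α] {H : SimpleHypergraph α} {d : ℕ} {E F : Finset α}

theorem edgeDist_self (hpc : UniformPC H d) (hE : E ∈ H.edges) : edgeDist H E E = 0 := by
  have hne : (E ∩ E).Nonempty := by
    rw [inter_self, ← card_pos]
    have := H.card_ge E hE
    omega
  rw [hpc.2 E hE E hE hne, inter_self, hpc.1 E hE, Nat.sub_self, Nat.cast_zero]

theorem edgeDist_le_of_inter_nonempty (hpc : UniformPC H d) (hE : E ∈ H.edges)
    (hF : F ∈ H.edges) (hEF : (E ∩ F).Nonempty) : edgeDist H E F ≤ d := by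
  rw [hpc.2 E hE F hF hEF]
  exact_mod_cast Nat.sub_le _ _

theorem disjoint_of_le_edgeDist (hpc : UniformPC H d) (hE : E ∈ H.edges) (hF : F ∈ H.edges)
    (h : (d : ℕ∞) + 1 ≤ edgeDist H E F) : Disjoint E F := by
  rw [disjoint_iff_inter_eq_empty, ← not_nonempty_iff_eq_empty]
  intro hEF
  have : d + 1 ≤ d := by exact_mod_cast h.trans (hpc.edgeDist_le_of_inter_nonempty hE hF hEF)
  omega

theorem ne_of_le_edgeDist (hpc : UniformPC H d) (hE : E ∈ H.edges)
    (h : (d : ℕ∞) + 1 ≤ edgeDist H E F) : F ≠ E := by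
  rintro rfl
  rw [hpc.edgeDist_self hE] at h
  simp at h

theorem exists_mem_nbrSet_of_edgeDist_le (hpc : UniformPC H d) (hE : E ∈ H.edges)
    (hF : F ∈ H.edges) (hne : F ≠ E) (h : edgeDist H E F ≤ d) :
    ∃ z ∈ F \ E, z ∈ nbrSet H E := by
  obtain ⟨l, hl, hlast, hlen⟩ :=
    exists_isProperChain_of_edgeDist_ne_top (ne_top_of_le_ne_top (ENat.natCast_ne_top d) h)
  obtain _ | ⟨E₁, rest⟩ := l
  · exact absurd (by simpa using hlast) hne.symm
  have hE₁ : E₁ ∈ H.edges := hl.1.2.2.1 E₁ (by simp)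
  have hdist₁ : edgeDist H E E₁ = 1 := by
    have := hl.card_inter_add_one
    rw [hpc.2 E hE E₁ hE₁ hl.1.inter_nonempty, ← Nat.cast_one, Nat.cast_inj]
    rw [hpc.1 E₁ hE₁] at this
    omega
  obtain ⟨z, hz⟩ := card_eq_one.mp hl.card_sdiff_eq_one
  have hzE₁ : z ∈ E₁ \ E := hz ▸ mem_singleton_self z
  refine ⟨z, mem_sdiff.2 ⟨?_, (mem_sdiff.1 hzE₁).2⟩, mem_nbrSet_iff.2 ⟨E₁, hE₁, hdist₁, hz⟩⟩
  by_contra hzF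
  have hsub : E₁ ∩ F ⊆ E ∩ F := by
    intro x hx
    rw [mem_inter] at hx ⊢
    refine ⟨by_contra fun hxE => hzF ?_, hx.2⟩
    have hxz : x ∈ E₁ \ E := mem_sdiff.2 ⟨hx.1, hxE⟩
    rw [hz, mem_singleton] at hxz
    exact hxz ▸ hx.2
  have hFE₁ := (hl.tail (List.cons_ne_nil _ _)).card_sdiff_le
    (by rwa [List.getLast?_cons_cons] at hlast)
  have hF₁ := card_sdiff_add_card_inter F E₁
  rw [inter_comm, hpc.1 F hF] at hF₁
  have hsub_card := card_le_card hsub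
  have hlen_le : rest.length + 1 ≤ d := by
    rw [← hlen] at h
    exact_mod_cast h
  have hEF : (E ∩ F).Nonempty := card_pos.1 (by omega)
  have hdist : rest.length + 1 = d - (E ∩ F).card := by
    exact_mod_cast hlen.trans (hpc.2 E hE F hF hEF)
  omega

end UniformPC

theorem intersection_ideal_eq (k : Type*) [Field k] {V : Type*} [DecidableEq V]
    (H : SimpleHypergraph V) (d : ℕ) (hpc : UniformPC H d)
    (E : Finset V) (hE : E ∈ H.edges) :
    Ideal.span {edgeMonomial k E} ⊓ edgeIdeal k (H.restrict (· ≠ E)) =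
    Ideal.span {edgeMonomial k E} *
      (Ideal.span ((fun z => (MvPolynomial.X z : MvPolynomial V k)) '' ↑(nbrSet H E)) +
        edgeIdeal k (H.restrict fun F => ((d : ℕ∞) + 1) ≤ edgeDist H E F)) := by
  have hX : (fun z => (MvPolynomial.X z : MvPolynomial V k)) '' ↑(nbrSet H E) =
      edgeMonomial k '' ((fun z => {z}) '' ↑(nbrSet H E)) := by
    simp only [Set.image_image, edgeMonomial_singleton]
  rw [edgeIdeal, edgeIdeal, span_singleton_edgeMonomial_inf_span, hX, Submodule.add_eq_sup,
    ← Ideal.span_union, ← Set.image_union]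
  congr 1
  refine le_antisymm (span_edgeMonomial_le_span k ?_) (span_edgeMonomial_le_span k ?_)
  · rintro _ ⟨F, hFr, rfl⟩
    obtain ⟨hF, hFE⟩ := SimpleHypergraph.mem_restrict_edges.1 hFr
    by_cases hfar : (d : ℕ∞) + 1 ≤ edgeDist H E F
    · exact ⟨F, Or.inr (SimpleHypergraph.mem_restrict_edges.2 ⟨hF, hfar⟩),
        (hpc.disjoint_of_le_edgeDist hE hF hfar).symm.sdiff_eq_left.ge⟩
    · obtain ⟨z, hzF, hzN⟩ := hpc.exists_mem_nbrSet_of_edgeDist_le hE hF hFE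
        ((ENat.lt_add_one_iff (ENat.natCast_ne_top d)).1 (not_le.1 hfar))
      exact ⟨{z}, Or.inl ⟨z, hzN, rfl⟩, singleton_subset_iff.2 hzF⟩
  · rintro _ (⟨z, hz, rfl⟩ | hFr)
    · obtain ⟨F, hF, -, hFz⟩ := mem_nbrSet_iff.1 hz
      have hFE : F ≠ E := by
        rintro rfl
        simp at hFz
      exact ⟨F \ E, ⟨F, SimpleHypergraph.mem_restrict_edges.2 ⟨hF, hFE⟩, rfl⟩, hFz.le⟩
    · obtain ⟨hF, hfar⟩ := SimpleHypergraph.mem_restrict_edges.1 hFr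
      exact ⟨_, ⟨_, SimpleHypergraph.mem_restrict_edges.2 ⟨hF, hpc.ne_of_le_edgeDist hE hfar⟩,
        rfl⟩, sdiff_subset⟩

end
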